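/- Sequence-level form of Proposition 3.2 of the paper (essential boundedness forces α ≥ dim X once K_X + A is effective): let H_A, H_K : ℕ → ℝ be sequences of positive reals (modeling the heights of an ample divisor A and of the canonical divisor K_X along a sequence of rational points converging to P), let n be a real number, and suppose: (i) there exists a real N > 0 with (H_K i) * (H_A i) ≥ N for all i (modeling the lower bound on the height of the effective divisor K_X + A off its support); and (ii) for every rational ε > 0, α(d, (fun i ↦ (H_A i)^ε / (H_K i))) ≥ n (modeling essential boundedness: α_ess(P, −K_X + εA) ≥ dim X). Then α(d, H_A) ≥ n in EReal. -/
import Mathlib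


open Filter

/-- `A(d, H)`: the set of real exponents `γ` such that `i ↦ (d i)^γ * H i`
is bounded from above. -/
noncomputable def approxSet (d H : ℕ → ℝ) : Set ℝ :=
  {γ : ℝ | BddAbove (Set.range fun i => d i ^ γ * H i)}

/-- The approximation constant `α(d, H) ∈ EReal`: the infimum of `A(d, H)`,
equal to `+∞` if `A(d, H)` is empty and `-∞` if it is unbounded below. -/
noncomputable def approxConst (d H : ℕ → ℝ) : EReal :=
  sInf (Real.toEReal '' approxSet d H)

/-- sequence-level form of Proposition 3.2: if the height of the
effective divisor `K_X + A` is bounded below along the sequence and essential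
boundedness holds (`α(d, (H_A)^ε / H_K) ≥ n` for all rational `ε > 0`), then
`α(d, H_A) ≥ n`. -/
theorem approxConst_ge_dim_of_essentially_bounded (d HA HK : ℕ → ℝ)
    (hd : ∀ i, 0 < d i) (hHA : ∀ i, 0 < HA i) (hHK : ∀ i, 0 < HK i)
    (hd0 : Tendsto d atTop (nhds 0))
    (n : ℝ)
    (hN : ∃ N : ℝ, 0 < N ∧ ∀ i, N ≤ HK i * HA i)
    (hess : ∀ ε : ℚ, 0 < ε →
      (n : EReal) ≤ approxConst d (fun i => HA i ^ (ε : ℝ) / HK i)) :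
    (n : EReal) ≤ approxConst d HA := by
  rw [approxConst]
  refine le_sInf ?_
  rintro x ⟨γ, hγ, rfl⟩
  rw [EReal.coe_le_coe_iff]
  obtain ⟨N, hN0, hNle⟩ := hN
  obtain ⟨C, hC⟩ := hγ
  have hC' : ∀ i, d i ^ γ * HA i ≤ C := fun i => hC ⟨i, rfl⟩
  have hCpos : 0 < C := lt_of_lt_of_le (mul_pos (Real.rpow_pos_of_pos (hd 0) γ) (hHA 0)) (hC' 0)
  have key : ∀ ε : ℚ, 0 < ε → n ≤ γ * (1 + (ε : ℝ)) := by
    intro ε hε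
    have hεR : (0:ℝ) < (ε:ℝ) := by exact_mod_cast hε
    have hmem : γ * (1 + (ε:ℝ)) ∈ approxSet d (fun i => HA i ^ (ε:ℝ) / HK i) := by
      refine ⟨C ^ (1 + (ε:ℝ)) / N, ?_⟩
      rintro _ ⟨i, rfl⟩
      have h1 : d i ^ (γ * (1 + (ε:ℝ))) * (HA i ^ (ε:ℝ) / HK i)
          = (d i ^ γ * HA i) ^ (1 + (ε:ℝ)) / (HK i * HA i) := by
        rw [Real.rpow_mul (hd i).le, Real.mul_rpow (Real.rpow_pos_of_pos (hd i) γ).le (hHA i).le,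
          Real.rpow_add (hHA i) 1 (ε:ℝ), Real.rpow_one]
        rw [mul_comm (HA i) (HA i ^ (ε:ℝ)), ← mul_assoc,
          mul_div_mul_right _ _ (hHA i).ne', mul_div_assoc]
      show d i ^ (γ * (1 + (ε:ℝ))) * (HA i ^ (ε:ℝ) / HK i) ≤ C ^ (1 + (ε:ℝ)) / N
      rw [h1]
      exact div_le_div₀ (by positivity)
        (Real.rpow_le_rpow (mul_pos (Real.rpow_pos_of_pos (hd i) γ) (hHA i)).le (hC' i) (by positivity))
        hN0 (hNle i)
    have h2 : approxConst d (fun i => HA i ^ (ε:ℝ) / HK i)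
        ≤ ((γ * (1 + (ε:ℝ))) : EReal) := sInf_le ⟨_, hmem, rfl⟩
    have h3 := le_trans (hess ε hε) h2
    exact_mod_cast h3
  by_contra h
  push_neg at h
  rcases le_or_gt γ 0 with hγ0 | hγ0
  · have := key 1 one_pos
    push_cast at this
    nlinarith
  · obtain ⟨ε, hε1, hε2⟩ := exists_rat_btwn (show (0:ℝ) < (n - γ)/γ from div_pos (by linarith) hγ0)
    have hk := key ε (by exact_mod_cast hε1)
    have : (ε:ℝ) * γ < n - γ := by
      have := (lt_div_iff₀ hγ0).mp hε2
      linarith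
    nlinarith
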